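/- arXiv:2212.08630 — 2 statements merged into one kernel-verified Lean document; each statement's English description precedes it below -/
import Mathlib

section
/- Let n ≥ 1 and k, l ≥ 0 be integers with l + k even. For every (k,l)-Brauer partition β, the linear map E_β : (ℝⁿ)^{⊗k} → (ℝⁿ)^{⊗l} is O(n)-equivariant. -/
open Matrix

noncomputable section

/-- The matrix of `g^{⊗k}` in the standard basis of `(ℝⁿ)^{⊗k}`. -/
def tpowM {n : ℕ} (k : ℕ) (g : Matrix (Fin n) (Fin n) ℝ) :
    Matrix (Fin k → Fin n) (Fin k → Fin n) ℝ :=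
  Matrix.of fun I J => ∏ r, g (I r) (J r)

/-- Equivariance for the set of matrices satisfying `P`. -/
def IsGEquiv {n : ℕ} (k l : ℕ) (P : Matrix (Fin n) (Fin n) ℝ → Prop)
    (φ : ((Fin k → Fin n) → ℝ) →ₗ[ℝ] ((Fin l → Fin n) → ℝ)) : Prop :=
  ∀ g : Matrix (Fin n) (Fin n) ℝ, P g →
    φ ∘ₗ (tpowM k g).mulVecLin = (tpowM l g).mulVecLin ∘ₗ φ

/-- A partition of `{1, …, N}` into disjoint pairs (a perfect matching),
encoded as a fixed-point-free involution: the blocks are the sets `{p, pair p}`. -/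
structure BrauerPairing (N : ℕ) where
  pair : Fin N → Fin N
  invol : ∀ p, pair (pair p) = p
  ne : ∀ p, pair p ≠ p

/-- The matrix `E_β` of a `(k,l)`-Brauer partition `β`: the `(I,J)` entry is
`∏_{{p,q} ∈ β} δ_{c_p, c_q}` where `c = I ⌢ J` is the concatenated index tuple. -/
def brauerMatrix (n k l : ℕ) (β : BrauerPairing (l + k)) :
    Matrix (Fin l → Fin n) (Fin k → Fin n) ℝ :=
  Matrix.of fun I J =>
    ∏ p ∈ Finset.univ.filter (fun p => p < β.pair p),
      if Fin.append I J p = Fin.append I J (β.pair p) then (1 : ℝ) else 0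

/-! ### Auxiliary lemmas -/

lemma tpowM_one {n k : ℕ} : tpowM (n := n) k (1 : Matrix (Fin n) (Fin n) ℝ) = 1 := by
  ext I J
  simp only [tpowM, Matrix.of_apply, Matrix.one_apply, Finset.prod_boole]
  simp [funext_iff]

lemma tpowM_mul {n k : ℕ} (g h : Matrix (Fin n) (Fin n) ℝ) :
    tpowM (n := n) k (g * h) = tpowM k g * tpowM k h := by
  ext I J
  simp only [tpowM, Matrix.of_apply, Matrix.mul_apply]
  rw [Finset.prod_univ_sum, Fintype.piFinset_univ]
  exact Finset.sum_congr rfl fun K _ => Finset.prod_mul_distrib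

/-- Split a product over all positions into a product over the pairs. -/
lemma prod_pairs {N : ℕ} (β : BrauerPairing N) (f : Fin N → ℝ) :
    ∏ p, f p = ∏ p ∈ Finset.univ.filter (fun p => p < β.pair p), (f p * f (β.pair p)) := by
  rw [Finset.prod_mul_distrib,
    ← Finset.prod_filter_mul_prod_filter_not Finset.univ (fun p => p < β.pair p) f]
  congr 1
  refine (Finset.prod_nbij' β.pair β.pair ?_ ?_ ?_ ?_ ?_).symm
  · intro a ha
    simp only [Finset.mem_filter, Finset.mem_univ, true_and] at ha ⊢
    rw [β.invol]
    exact not_lt.mpr ha.le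
  · intro a ha
    simp only [Finset.mem_filter, Finset.mem_univ, true_and, not_lt] at ha ⊢
    rw [β.invol]
    exact lt_of_le_of_ne ha (β.ne a)
  · intro a _; exact β.invol a
  · intro a _; exact β.invol a
  · intro a _; rfl

/-- Functions on `Fin N` correspond to pair-valued functions on the pairs. -/
def pairFnEquiv {N : ℕ} (β : BrauerPairing N) (n : ℕ) :
    (Fin N → Fin n) ≃ ({p : Fin N // p < β.pair p} → Fin n × Fin n) where
  toFun c p := (c p.1, c (β.pair p.1))
  invFun u q :=
    if h : q < β.pair q then (u ⟨q, h⟩).1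
    else (u ⟨β.pair q, by rw [β.invol]; exact lt_of_le_of_ne (not_lt.mp h) (β.ne q)⟩).2
  left_inv c := by
    funext q
    by_cases h : q < β.pair q
    · simp [h]
    · simp [h, β.invol]
  right_inv u := by
    funext p
    obtain ⟨q, hq⟩ := p
    have h2 : ¬ (β.pair q < β.pair (β.pair q)) := by
      rw [β.invol]; exact not_lt.mpr hq.le
    ext
    · simp [hq]
    · simp only [dif_neg h2]
      generalize_proofs h'
      have h5 : (⟨β.pair (β.pair q), h'⟩ : {p : Fin N // p < β.pair p}) = ⟨q, hq⟩ :=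
        Subtype.ext (β.invol q)
      rw [h5]

/-- Factorize a sum over all index functions as a product over the pairs. -/
lemma sum_prod_pairs {N n : ℕ} (β : BrauerPairing N)
    (h : {p : Fin N // p < β.pair p} → Fin n → Fin n → ℝ) :
    ∑ c : Fin N → Fin n, ∏ p : {p : Fin N // p < β.pair p}, h p (c p.1) (c (β.pair p.1)) =
      ∏ p : {p : Fin N // p < β.pair p}, ∑ a : Fin n, ∑ b : Fin n, h p a b := by
  rw [Fintype.sum_equiv (pairFnEquiv β n)
    (fun c => ∏ p, h p (c p.1) (c (β.pair p.1)))
    (fun u => ∏ p, h p (u p).1 (u p).2) (fun c => rfl)]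
  have : (fun p : {p : Fin N // p < β.pair p} => ∑ a : Fin n, ∑ b : Fin n, h p a b) =
      fun p => ∑ ab : Fin n × Fin n, h p ab.1 ab.2 :=
    funext fun p =>
      (Fintype.sum_prod_type (fun ab : Fin n × Fin n => h p ab.1 ab.2)).symm
  rw [this, Finset.prod_univ_sum, Fintype.piFinset_univ]

/-- The key computation: conjugating `E_β` by tensor powers of an orthogonal
matrix returns `E_β`. -/
lemma core {n k l : ℕ} (g : Matrix (Fin n) (Fin n) ℝ) (hg : gᵀ * g = 1)
    (β : BrauerPairing (l + k)) :
    tpowM l gᵀ * (brauerMatrix n k l β * tpowM k g) = brauerMatrix n k l β := by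
  ext I J
  set d : Fin (l + k) → Fin n := Fin.append I J with hd
  have hsub : ∀ x : Fin (l + k), x ∈ Finset.univ.filter (fun p => p < β.pair p) ↔
      x < β.pair x := by simp
  have hA : ∀ (L : Fin l → Fin n) (K : Fin k → Fin n),
      (∏ t, g (L t) (I t)) * (brauerMatrix n k l β L K * ∏ r, g (K r) (J r)) =
      ∏ p : {p : Fin (l + k) // p < β.pair p},
        ((if Fin.append L K p.1 = Fin.append L K (β.pair p.1) then (1:ℝ) else 0) *
          (g (Fin.append L K p.1) (d p.1) * g (Fin.append L K (β.pair p.1)) (d (β.pair p.1)))) := by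
    intro L K
    have h1 : (∏ t, g (L t) (I t)) * (∏ r, g (K r) (J r)) =
        ∏ q : Fin (l + k), g (Fin.append L K q) (d q) := by
      rw [Fin.prod_univ_add (fun q => g (Fin.append L K q) (d q))]
      simp [hd, Fin.append_left, Fin.append_right]
    have h2 : (∏ q : Fin (l + k), g (Fin.append L K q) (d q)) =
        ∏ p : {p : Fin (l + k) // p < β.pair p},
          (g (Fin.append L K p.1) (d p.1) * g (Fin.append L K (β.pair p.1)) (d (β.pair p.1))) := by
      rw [prod_pairs β (fun q => g (Fin.append L K q) (d q)),
        Finset.prod_subtype _ hsub]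
    have h3 : brauerMatrix n k l β L K =
        ∏ p : {p : Fin (l + k) // p < β.pair p},
          (if Fin.append L K p.1 = Fin.append L K (β.pair p.1) then (1:ℝ) else 0) := by
      rw [brauerMatrix, Matrix.of_apply, Finset.prod_subtype _ hsub]
    calc (∏ t, g (L t) (I t)) * (brauerMatrix n k l β L K * ∏ r, g (K r) (J r))
        = brauerMatrix n k l β L K * ((∏ t, g (L t) (I t)) * ∏ r, g (K r) (J r)) := by ring
      _ = _ := by rw [h1, h2, h3, ← Finset.prod_mul_distrib]
  have lhs_eq : (tpowM l gᵀ * (brauerMatrix n k l β * tpowM k g)) I J =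
      ∑ L : Fin l → Fin n, ∑ K : Fin k → Fin n,
        (∏ t, g (L t) (I t)) * (brauerMatrix n k l β L K * ∏ r, g (K r) (J r)) := by
    simp only [Matrix.mul_apply, tpowM, Matrix.of_apply, Matrix.transpose_apply,
      Finset.mul_sum, Finset.sum_mul]
  set F : (Fin (l + k) → Fin n) → {p : Fin (l + k) // p < β.pair p} → ℝ := fun c p =>
    (if c p.1 = c (β.pair p.1) then (1:ℝ) else 0) *
      (g (c p.1) (d p.1) * g (c (β.pair p.1)) (d (β.pair p.1))) with hF
  have hper : ∀ p : {p : Fin (l + k) // p < β.pair p},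
      (∑ a : Fin n, ∑ b : Fin n,
        (if a = b then (1:ℝ) else 0) * (g a (d p.1) * g b (d (β.pair p.1)))) =
      (if d p.1 = d (β.pair p.1) then (1:ℝ) else 0) := by
    intro p
    have h4 : (∑ a : Fin n, ∑ b : Fin n,
        (if a = b then (1:ℝ) else 0) * (g a (d p.1) * g b (d (β.pair p.1)))) =
        (gᵀ * g) (d p.1) (d (β.pair p.1)) := by
      simp only [Matrix.mul_apply, Matrix.transpose_apply]
      refine Finset.sum_congr rfl fun a _ => ?_
      rw [Finset.sum_eq_single a]
      · simp
      · intro b _ hb; simp [Ne.symm hb]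
      · simp
    rw [h4, hg, Matrix.one_apply]
  rw [lhs_eq]
  calc (∑ L : Fin l → Fin n, ∑ K : Fin k → Fin n,
        (∏ t, g (L t) (I t)) * (brauerMatrix n k l β L K * ∏ r, g (K r) (J r)))
      = ∑ L : Fin l → Fin n, ∑ K : Fin k → Fin n, ∏ p, F (Fin.append L K) p :=
        Finset.sum_congr rfl fun L _ => Finset.sum_congr rfl fun K _ => hA L K
    _ = ∑ c : Fin (l + k) → Fin n, ∏ p, F c p := by
        rw [← Equiv.sum_comp (Fin.appendEquiv l k) (fun c => ∏ p, F c p),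
          Fintype.sum_prod_type]
        exact Finset.sum_congr rfl fun x _ => Finset.sum_congr rfl fun y _ => rfl
    _ = ∏ p : {p : Fin (l + k) // p < β.pair p}, ∑ a : Fin n, ∑ b : Fin n,
          (if a = b then (1:ℝ) else 0) * (g a (d p.1) * g b (d (β.pair p.1))) :=
        sum_prod_pairs β (fun p a b =>
          (if a = b then (1:ℝ) else 0) * (g a (d p.1) * g b (d (β.pair p.1))))
    _ = ∏ p : {p : Fin (l + k) // p < β.pair p},
          (if d p.1 = d (β.pair p.1) then (1:ℝ) else 0) :=
        Finset.prod_congr rfl fun p _ => hper p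
    _ = brauerMatrix n k l β I J := by
        rw [brauerMatrix, Matrix.of_apply, Finset.prod_subtype _ hsub]

/-- For `l + k` even and any `(k,l)`-Brauer partition `β`, the map `E_β` is
`O(n)`-equivariant. -/
theorem stmt1 (n k l : ℕ) (hn : 1 ≤ n) (heven : Even (l + k))
    (β : BrauerPairing (l + k)) :
    IsGEquiv k l (fun g => gᵀ * g = 1) (brauerMatrix n k l β).mulVecLin := by
  intro g hg
  have hgg : g * gᵀ = 1 := mul_eq_one_comm.mp hg
  have hE : brauerMatrix n k l β * tpowM k g = tpowM l g * brauerMatrix n k l β := by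
    calc brauerMatrix n k l β * tpowM k g
        = (1 : Matrix (Fin l → Fin n) (Fin l → Fin n) ℝ) *
            (brauerMatrix n k l β * tpowM k g) := (Matrix.one_mul _).symm
      _ = (tpowM l g * tpowM l gᵀ) * (brauerMatrix n k l β * tpowM k g) := by
          rw [← tpowM_mul, hgg, tpowM_one]
      _ = tpowM l g * (tpowM l gᵀ * (brauerMatrix n k l β * tpowM k g)) :=
          Matrix.mul_assoc _ _ _
      _ = tpowM l g * brauerMatrix n k l β := by rw [core g hg β]
  rw [← Matrix.mulVecLin_mul, ← Matrix.mulVecLin_mul, hE]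
end
end

section
/- Let n ≥ 1 and k, l ≥ 0 be integers with n ≤ l + k and n ≡ l + k (mod 2). For every (l+k)\n-partition α, the linear map H_α : (ℝⁿ)^{⊗k} → (ℝⁿ)^{⊗l} is SO(n)-equivariant. -/
/-!
Read the `(I, J)` entry of `H_α` as a tensor `T (I ⌢ J)` on `l + k` positions; then
`H_α g^{⊗k} = g^{⊗l} H_α` for orthogonal `g` amounts to the invariance of `T` under
`g^{⊗(l+k)}`. After relabelling the positions as the `n` free ones followed by the pairs,
`T` is a product of the Levi-Civita tensor on the free positions, which is multiplied by
`det g = 1`, and one Kronecker delta per pair, which is preserved because `gᵀ g = 1`.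
Products of invariant tensors on disjoint sets of positions are invariant.
-/

open Matrix

noncomputable section

/-- An `(N)\\n`-partition: a choice of `n` "free" elements of `{1, …, N}` together
with a partition of the remaining `N - n` elements into disjoint pairs; the pairing
is encoded as an involution fixing exactly the free elements, whose nontrivial
orbits `{p, pair p}` are the blocks. -/
structure GroodPartition (N n : ℕ) where
  free : Finset (Fin N)
  card_free : free.card = n
  pair : Fin N → Fin N
  invol : ∀ p, pair (pair p) = p
  fixed_iff_free : ∀ p, pair p = p ↔ p ∈ free

/-- The free elements of `α`, listed in increasing order.  (Since every free
element of the top row precedes every free element of the bottom row, this is the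
list `t₁, …, t_s, b₁, …, b_{n-s}`.) -/
def GroodPartition.sorted {N n : ℕ} (α : GroodPartition N n) : Fin n → Fin N :=
  fun r => (α.free.sort (· ≤ ·)).get
    (Fin.cast (by rw [Finset.length_sort, α.card_free]) r)

/-- `χ(c_{t₁}, …, c_{t_s}, c_{b₁}, …, c_{b_{n-s}})`: zero if the indices attached
to the free vertices are not distinct, and otherwise the sign of the permutation
of `[n]` they determine.  This is exactly the determinant of the corresponding
"would-be permutation" 0/1 matrix. -/
def chiDet {N n : ℕ} (α : GroodPartition N n) (c : Fin N → Fin n) : ℝ :=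
  Matrix.det (Matrix.of fun a r : Fin n => if c (α.sorted r) = a then (1 : ℝ) else 0)

/-- The matrix `H_α` of an `(l+k)\\n`-partition `α`: the `(I,J)` entry is
`χ(c_{t₁},…,c_{b_{n-s}}) ⬝ ∏_{{p,q} a pair of α} δ_{c_p, c_q}` where `c = I ⌢ J`. -/
def groodMatrix (n k l : ℕ) (α : GroodPartition (l + k) n) :
    Matrix (Fin l → Fin n) (Fin k → Fin n) ℝ :=
  Matrix.of fun I J =>
    chiDet α (Fin.append I J) *
      ∏ p ∈ Finset.univ.filter (fun p => p ∉ α.free ∧ p < α.pair p),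
        if Fin.append I J p = Fin.append I J (α.pair p) then (1 : ℝ) else 0

open Finset

section TensorPower

variable {R m ι κ : Type*} [CommSemiring R] [Fintype ι] [Fintype κ]

def tensorPowMatrix (ι : Type*) [Fintype ι] (g : Matrix m m R) : Matrix (ι → m) (ι → m) R :=
  of fun I J => ∏ i, g (I i) (J i)

theorem tensorPowMatrix_one [DecidableEq m] : tensorPowMatrix ι (1 : Matrix m m R) = 1 := by
  ext I J
  simp only [tensorPowMatrix, of_apply, one_apply, prod_ite_zero, prod_const_one,
    funext_iff, mem_univ, true_implies]

variable [DecidableEq ι] [DecidableEq κ] [Fintype m]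

theorem tensorPowMatrix_mul (g h : Matrix m m R) :
    tensorPowMatrix ι g * tensorPowMatrix ι h = tensorPowMatrix ι (g * h) := by
  ext I J
  simp only [tensorPowMatrix, mul_apply, of_apply, ← prod_mul_distrib, Fintype.prod_sum]

/-- `T ᵥ* g^{⊗ι}` is `(gᵀ)^{⊗ι}` applied to `T`; for orthogonal `g` this is the same as
invariance under `g`. -/
def IsInvariantTensor (g : Matrix m m R) (T : (ι → m) → R) : Prop :=
  T ᵥ* tensorPowMatrix ι g = T

theorem vecMul_tensorPowMatrix_apply (g : Matrix m m R) (T : (ι → m) → R) (c : ι → m) :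
    (T ᵥ* tensorPowMatrix ι g) c = ∑ c', T c' * ∏ i, g (c' i) (c i) := rfl

theorem vecMul_tensorPowMatrix_sumElim (g : Matrix m m R) (T : (ι ⊕ κ → m) → R)
    (I : ι → m) (J : κ → m) :
    (T ᵥ* tensorPowMatrix (ι ⊕ κ) g) (Sum.elim I J) =
      ∑ I', ∑ J', T (Sum.elim I' J') * ((∏ i, g (I' i) (I i)) * ∏ j, g (J' j) (J j)) := by
  rw [vecMul_tensorPowMatrix_apply, ← Fintype.sum_prod_type',
    ← (Equiv.sumArrowEquivProdArrow ι κ m).symm.sum_comp]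
  simp only [Fintype.prod_sum_type]
  rfl

theorem IsInvariantTensor.comp_equiv {g : Matrix m m R} {T : (κ → m) → R}
    (hT : IsInvariantTensor g T) (e : κ ≃ ι) : IsInvariantTensor g fun c : ι → m => T (c ∘ e) := by
  funext c
  rw [vecMul_tensorPowMatrix_apply, ← congrFun hT (c ∘ e), vecMul_tensorPowMatrix_apply,
    ← (e.arrowCongr (Equiv.refl m)).sum_comp]
  refine sum_congr rfl fun d _ => ?_
  simp [Equiv.arrowCongr_apply, Function.comp_def, ← e.prod_comp]

theorem IsInvariantTensor.mul_sumElim {g : Matrix m m R} {T₁ : (ι → m) → R} {T₂ : (κ → m) → R}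
    (h₁ : IsInvariantTensor g T₁) (h₂ : IsInvariantTensor g T₂) :
    IsInvariantTensor g fun c : ι ⊕ κ → m => T₁ (c ∘ Sum.inl) * T₂ (c ∘ Sum.inr) := by
  funext c
  rw [← Sum.elim_comp_inl_inr c, vecMul_tensorPowMatrix_sumElim]
  simp only [Sum.elim_comp_inl, Sum.elim_comp_inr, mul_mul_mul_comm _ (T₂ _), ← mul_sum,
    ← sum_mul]
  rw [← vecMul_tensorPowMatrix_apply, ← vecMul_tensorPowMatrix_apply, h₁, h₂]

theorem IsInvariantTensor.prod {g : Matrix m m R} {T : (κ → m) → R}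
    (hT : IsInvariantTensor g T) :
    IsInvariantTensor g fun c : ι × κ → m => ∏ i, T fun j => c (i, j) := by
  funext c
  rw [vecMul_tensorPowMatrix_apply, ← (Equiv.curry ι κ m).symm.sum_comp]
  simp only [Equiv.curry_symm_apply, Function.uncurry_apply_pair, Fintype.prod_prod_type,
    ← prod_mul_distrib]
  refine (Fintype.prod_sum fun i (d : κ → m) => T d * ∏ j, g (d j) (c (i, j))).symm.trans ?_
  exact prod_congr rfl fun i _ => congrFun hT _

theorem tensorPowMatrix_transpose_mul_mul_tensorPowMatrix {l k : ℕ} {g : Matrix m m R}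
    {T : (Fin (l + k) → m) → R} (hT : IsInvariantTensor g T) :
    tensorPowMatrix (Fin l) gᵀ * of (fun I J => T (Fin.append I J)) * tensorPowMatrix (Fin k) g =
      of fun I J => T (Fin.append I J) := by
  ext I J
  have hsplit : ∀ (I' : Fin l → m) (J' : Fin k → m),
      T (Fin.append I' J') = T (Sum.elim I' J' ∘ finSumFinEquiv.symm) := by
    intro I' J'
    congr 1
    funext p
    refine Fin.addCases (fun i => ?_) (fun j => ?_) p <;> simp
  have hT' := congrFun (hT.comp_equiv finSumFinEquiv.symm) (Sum.elim I J)
  rw [vecMul_tensorPowMatrix_sumElim] at hT'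
  simp only [of_apply, hsplit] at hT' ⊢
  rw [← hT']
  simp only [mul_apply, tensorPowMatrix, of_apply, sum_mul, transpose_apply]
  rw [sum_comm]
  exact sum_congr rfl fun _ _ => sum_congr rfl fun _ _ => by ring

end TensorPower

section LeviCivita

variable (R : Type*) {m : Type*} [CommRing R] [Fintype m] [DecidableEq m]

def leviCivita (e : m → m) : R :=
  det (of fun a r => if e r = a then (1 : R) else 0)

theorem leviCivita_vecMul_tensorPowMatrix (g : Matrix m m R) :
    leviCivita R ᵥ* tensorPowMatrix m g = g.det • leviCivita R := by
  funext e
  have hcols : g * of (fun a r => if e r = a then (1 : R) else 0) =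
      (of fun r => ∑ b, g b (e r) • fun a => if b = a then (1 : R) else 0)ᵀ := by
    ext a r
    simp [mul_apply, Finset.sum_apply]
  rw [Pi.smul_apply, smul_eq_mul, leviCivita, ← det_mul, hcols, det_transpose]
  change _ = (detRowAlternating : AlternatingMap R (m → R) R m).toMultilinearMap
    fun r => ∑ b, g b (e r) • fun a => if b = a then (1 : R) else 0
  rw [MultilinearMap.map_sum, vecMul_tensorPowMatrix_apply]
  refine sum_congr rfl fun d _ => ?_
  rw [MultilinearMap.map_smul_univ, smul_eq_mul, mul_comm, leviCivita, ← det_transpose]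
  rfl

theorem isInvariantTensor_leviCivita {g : Matrix m m R} (hdet : g.det = 1) :
    IsInvariantTensor g (leviCivita R) := by
  rw [IsInvariantTensor, leviCivita_vecMul_tensorPowMatrix, hdet, one_smul]

end LeviCivita

section Orthogonal

variable {R m : Type*} [CommSemiring R] [Fintype m]

theorem vecMul_tensorPowMatrix_bilinear (g B : Matrix m m R) :
    (fun c : Fin 2 → m => B (c 0) (c 1)) ᵥ* tensorPowMatrix (Fin 2) g =
      fun c => (gᵀ * B * g) (c 0) (c 1) := by
  funext c
  rw [vecMul_tensorPowMatrix_apply, ← (piFinTwoEquiv fun _ => m).symm.sum_comp,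
    Fintype.sum_prod_type]
  simp only [piFinTwoEquiv_symm_apply, Fin.cons_zero, Fin.cons_one, Fin.prod_univ_two,
    mul_apply, transpose_apply, sum_mul, mul_assoc, mul_left_comm]
  exact sum_comm

variable [DecidableEq m]

theorem isInvariantTensor_one_apply {g : Matrix m m R} (hg : gᵀ * g = 1) :
    IsInvariantTensor g fun c : Fin 2 → m => (1 : Matrix m m R) (c 0) (c 1) := by
  rw [IsInvariantTensor, vecMul_tensorPowMatrix_bilinear, Matrix.mul_one, hg]

end Orthogonal

namespace GroodPartition

variable {N n : ℕ} (α : GroodPartition N n)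

theorem pair_mem_free_iff {p : Fin N} : α.pair p ∈ α.free ↔ p ∈ α.free := by
  rw [← α.fixed_iff_free, ← α.fixed_iff_free, α.invol, eq_comm]

theorem pair_injective : Function.Injective α.pair :=
  Function.LeftInverse.injective α.invol

theorem sorted_mem_free (r : Fin n) : α.sorted r ∈ α.free :=
  (mem_sort _).1 (List.get_mem _ _)

theorem sorted_injective : Function.Injective α.sorted :=
  fun _ _ h => Fin.cast_injective _ ((α.free.sort_nodup _).injective_get h)

theorem exists_sorted_eq {p : Fin N} (hp : p ∈ α.free) : ∃ r, α.sorted r = p := by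
  obtain ⟨i, hi⟩ := List.mem_iff_get.1 ((mem_sort (· ≤ ·)).2 hp)
  exact ⟨Fin.cast (by rw [length_sort, α.card_free]) i, hi⟩

abbrev PairRep := {p : Fin N // p ∉ α.free ∧ p < α.pair p}

def blockIndex : Fin n ⊕ (α.PairRep × Fin 2) → Fin N
  | .inl r => α.sorted r
  | .inr (s, i) => ![s.1, α.pair s.1] i

theorem PairRep.ne_pair (s s' : α.PairRep) : s.1 ≠ α.pair s'.1 := by
  intro h
  have hlt := s.2.2
  rw [h, α.invol] at hlt
  exact lt_asymm hlt s'.2.2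

theorem blockIndex_inr_notMem_free (s : α.PairRep) (i : Fin 2) :
    α.blockIndex (.inr (s, i)) ∉ α.free := by
  fin_cases i
  · exact s.2.1
  · exact α.pair_mem_free_iff.not.2 s.2.1

theorem blockIndex_injective : Function.Injective α.blockIndex := by
  rintro (r | ⟨s, i⟩) (r' | ⟨s', i'⟩) h
  · exact congrArg _ (α.sorted_injective h)
  · exact absurd (h ▸ α.sorted_mem_free r) (α.blockIndex_inr_notMem_free s' i')
  · exact absurd (h ▸ α.sorted_mem_free r') (α.blockIndex_inr_notMem_free s i)
  · fin_cases i <;> fin_cases i' <;> simp only [blockIndex] at h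
    · simp [Subtype.ext h]
    · exact absurd h (PairRep.ne_pair α s s')
    · exact absurd h.symm (PairRep.ne_pair α s' s)
    · simp [Subtype.ext (α.pair_injective h)]

theorem blockIndex_surjective : Function.Surjective α.blockIndex := by
  intro p
  by_cases hp : p ∈ α.free
  · obtain ⟨r, rfl⟩ := α.exists_sorted_eq hp
    exact ⟨.inl r, rfl⟩
  rcases Ne.lt_or_gt ((α.fixed_iff_free p).not.2 hp) with hlt | hlt
  · refine ⟨.inr (⟨α.pair p, α.pair_mem_free_iff.not.2 hp, by rwa [α.invol]⟩, 1), ?_⟩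
    simp [blockIndex, α.invol]
  · exact ⟨.inr (⟨p, hp, hlt⟩, 0), rfl⟩

theorem blockIndex_bijective : Function.Bijective α.blockIndex :=
  ⟨α.blockIndex_injective, α.blockIndex_surjective⟩

def blockEquiv : Fin n ⊕ (α.PairRep × Fin 2) ≃ Fin N :=
  Equiv.ofBijective _ α.blockIndex_bijective

/-- `groodMatrix n k l α I J = α.tensor (Fin.append I J)` holds by `rfl`. -/
def tensor (c : Fin N → Fin n) : ℝ :=
  chiDet α c * ∏ p ∈ univ.filter (fun p => p ∉ α.free ∧ p < α.pair p),
    if c p = c (α.pair p) then (1 : ℝ) else 0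

theorem tensor_eq (c : Fin N → Fin n) :
    α.tensor c = leviCivita ℝ (c ∘ α.blockEquiv ∘ Sum.inl) *
      ∏ s : α.PairRep, (1 : Matrix (Fin n) (Fin n) ℝ)
        (c (α.blockEquiv (.inr (s, 0)))) (c (α.blockEquiv (.inr (s, 1)))) := by
  rw [tensor, prod_subtype (p := fun p => p ∉ α.free ∧ p < α.pair p) _ (fun p => by simp)]
  rfl

theorem isInvariantTensor_tensor {g : Matrix (Fin n) (Fin n) ℝ} (hg : gᵀ * g = 1)
    (hdet : g.det = 1) : IsInvariantTensor g α.tensor := by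
  rw [show α.tensor = _ from funext α.tensor_eq]
  exact ((isInvariantTensor_leviCivita ℝ hdet).mul_sumElim
    (isInvariantTensor_one_apply hg).prod).comp_equiv α.blockEquiv

end GroodPartition

theorem stmt10_general (n k l : ℕ) (α : GroodPartition (l + k) n) :
    IsGEquiv k l (fun g => gᵀ * g = 1 ∧ g.det = 1)
      (groodMatrix n k l α).mulVecLin := by
  rintro g ⟨hg, hdet⟩
  have hsandwich : tensorPowMatrix (Fin l) gᵀ * groodMatrix n k l α * tensorPowMatrix (Fin k) g =
      groodMatrix n k l α :=
    tensorPowMatrix_transpose_mul_mul_tensorPowMatrix (T := α.tensor)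
      (α.isInvariantTensor_tensor hg hdet)
  have hinv : tensorPowMatrix (Fin l) g * tensorPowMatrix (Fin l) gᵀ = 1 := by
    rw [tensorPowMatrix_mul, mul_eq_one_comm.1 hg, tensorPowMatrix_one]
  change (groodMatrix n k l α).mulVecLin ∘ₗ (tensorPowMatrix (Fin k) g).mulVecLin =
    (tensorPowMatrix (Fin l) g).mulVecLin ∘ₗ (groodMatrix n k l α).mulVecLin
  rw [← mulVecLin_mul, ← mulVecLin_mul]
  congr 1
  calc groodMatrix n k l α * tensorPowMatrix (Fin k) g
      = tensorPowMatrix (Fin l) g * tensorPowMatrix (Fin l) gᵀ * groodMatrix n k l α *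
          tensorPowMatrix (Fin k) g := by rw [hinv, Matrix.one_mul]
    _ = tensorPowMatrix (Fin l) g * groodMatrix n k l α := by
      conv_rhs => rw [← hsandwich]
      simp only [Matrix.mul_assoc]

/-- For `n ≤ l + k` with `n ≡ l + k (mod 2)`, each `H_α` is `SO(n)`-equivariant. -/
theorem stmt10 (n k l : ℕ) (hn : 1 ≤ n) (hle : n ≤ l + k)
    (hmod : n % 2 = (l + k) % 2) (α : GroodPartition (l + k) n) :
    IsGEquiv k l (fun g => gᵀ * g = 1 ∧ g.det = 1)
      (groodMatrix n k l α).mulVecLin :=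
  stmt10_general n k l α
end
end
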